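/- arXiv:0801.3011 — 8 statements merged into one kernel-verified Lean document; each statement's English description precedes it below -/
import Mathlib

section
/- Let F have characteristic 2 and let b, c ∈ F[x] with deg c > 2 deg b and deg c odd. Then the equation ω² + bω + c = 0 has no solution ω in the field of formal Laurent series F((1/x)) (equivalently, no solution as a formal power series in descending powers of x). -/
/-!
Measured by the exponent of 1/x, the terms ω², bω and c have orders 2·ord ω, at least
ord ω − deg b, and −deg c. As they sum to zero, the smallest order is attained twice. Not by ω²
and c, since deg c is odd. Not by ω² and bω: that forces ord ω ≥ −deg b, so
2·ord ω ≥ −2 deg b > −deg c. Not by bω and c: that forces ord ω ≤ deg b − deg c, so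
2·ord ω < −deg c.
-/

open Polynomial

/-- The image of a polynomial in F((1/x)): evaluate at x = X⁻¹, where the
variable x corresponds to the Laurent series `single (-1) 1` of degree 1. -/
noncomputable def polyToLaurentInv (F : Type) [Field F] (p : Polynomial F) :
    LaurentSeries F :=
  Polynomial.aeval (HahnSeries.single (-1 : ℤ) (1 : F)) p

theorem HahnSeries.min_le_of_add_add_eq_zero {Γ R : Type*} [LinearOrder Γ] [AddCommGroup R]
    {x y z : HahnSeries Γ R} (h : x + y + z = 0) {a b c : Γ} (hx : x.orderTop = c)
    (hy : a ≤ y.orderTop) (hz : b ≤ z.orderTop) : min a b ≤ c := by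
  have hx' : x = -(y + z) := by rw [← sub_eq_zero, sub_neg_eq_add, ← add_assoc, h]
  rw [← WithTop.coe_le_coe, WithTop.coe_min, ← hx, hx', orderTop_neg]
  exact (min_le_min hy hz).trans min_orderTop_le_orderTop_add

variable {F : Type} [Field F]

theorem coeff_polyToLaurentInv_neg (p : F[X]) (n : ℕ) :
    (polyToLaurentInv F p).coeff (-n) = p.coeff n := by
  induction p using Polynomial.induction_on' with
  | add p q hp hq =>
    rw [polyToLaurentInv, map_add, HahnSeries.coeff_add, ← polyToLaurentInv, ← polyToLaurentInv,
      hp, hq, coeff_add]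
  | monomial k a =>
    rw [polyToLaurentInv, aeval_monomial, LaurentSeries.algebraMap_apply, HahnSeries.single_pow,
      one_pow, HahnSeries.C_apply, HahnSeries.single_mul_single, zero_add, mul_one,
      HahnSeries.coeff_single, coeff_monomial]
    simp [eq_comm]

theorem orderTop_polyToLaurentInv {p : F[X]} (hp : p ≠ 0) :
    (polyToLaurentInv F p).orderTop = (-p.natDegree : ℤ) := by
  refine HahnSeries.orderTop_eq_of_le ?_ fun m hm => ?_
  · rw [HahnSeries.mem_support, coeff_polyToLaurentInv_neg]
    exact leadingCoeff_ne_zero.2 hp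
  · by_contra! hlt
    obtain ⟨n, rfl⟩ : ∃ n : ℕ, m = -n := ⟨(-m).toNat, by omega⟩
    rw [HahnSeries.mem_support, coeff_polyToLaurentInv_neg] at hm
    exact hm (coeff_eq_zero_of_natDegree_lt (by omega))

theorem neg_natDegree_le_orderTop_polyToLaurentInv (p : F[X]) :
    ((-p.natDegree : ℤ) : WithTop ℤ) ≤ (polyToLaurentInv F p).orderTop := by
  rcases eq_or_ne p 0 with rfl | hp
  · simp [polyToLaurentInv]
  · exact (orderTop_polyToLaurentInv hp).ge

theorem no_laurent_root_of_odd_degree_general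
    (F : Type) [Field F] (b c : Polynomial F)
    (hodd : Odd c.natDegree) (hdeg : 2 * b.natDegree < c.natDegree) :
    ¬ ∃ ω : LaurentSeries F,
        ω ^ 2 + polyToLaurentInv F b * ω + polyToLaurentInv F c = 0 := by
  rintro ⟨ω, h⟩
  have hC := orderTop_polyToLaurentInv (ne_zero_of_natDegree_gt hdeg)
  have hω : ω ≠ 0 := by
    rintro rfl
    have hc : polyToLaurentInv F c = 0 := by simpa using h
    rw [hc, HahnSeries.orderTop_zero] at hC
    exact WithTop.top_ne_coe hC
  obtain ⟨o, ho⟩ := WithTop.ne_top_iff_exists.1 (HahnSeries.orderTop_ne_top.2 hω)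
  have hω2 : (ω ^ 2).orderTop = (2 * o : ℤ) := by
    rw [sq, HahnSeries.orderTop_mul, ← ho, two_mul, WithTop.coe_add]
  have hBω : ((-b.natDegree + o : ℤ) : WithTop ℤ) ≤ (polyToLaurentInv F b * ω).orderTop := by
    rw [HahnSeries.orderTop_mul, ← ho, WithTop.coe_add]
    exact add_le_add_left (neg_natDegree_le_orderTop_polyToLaurentInv b) _
  have h1 := HahnSeries.min_le_of_add_add_eq_zero h hω2 hBω hC.ge
  have h2 := HahnSeries.min_le_of_add_add_eq_zero (by linear_combination h) hC hω2.ge hBω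
  obtain ⟨k, hk⟩ := hodd
  omega

/-- char F = 2, deg c > 2 deg b, deg c odd: ω² + bω + c = 0 has no solution in
the Laurent series field F((1/x)). -/
theorem no_laurent_root_of_odd_degree
    (F : Type) [Field F] [CharP F 2] (b c : Polynomial F)
    (hodd : Odd c.natDegree) (hdeg : 2 * b.natDegree < c.natDegree) :
    ¬ ∃ ω : LaurentSeries F,
        ω ^ 2 + polyToLaurentInv F b * ω + polyToLaurentInv F c = 0 :=
  no_laurent_root_of_odd_degree_general F b c hodd hdeg
end

section
/- Let F have characteristic 2 and b, c ∈ F[x] with deg c = 2 deg b, b ≠ 0, and suppose the equation b₀²t² + b₀²t + c₀ = 0 (where b₀, c₀ are the leading coefficients of b and c) has no solution t in F. Then ω² + bω + c = 0 has no solution ω in the Laurent series field F((1/x)). -/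
/-!
Compare orders in `ω² + bω + c = 0` in `F((1/x))`, where `b` and `c` have orders `-n` and
`-2n`, `n = deg b`. If `ord ω < -n`, the term `ω²` alone has the least order; if `ord ω > -n`,
the term `c` does. Hence `ord ω = -n`, and the coefficients at order `-2n` give
`u² + b₀u + c₀ = 0` for the leading coefficient `u` of `ω`, i.e. `t = u / b₀` solves
`b₀²t² + b₀²t + c₀ = 0`.
-/

open Polynomial

namespace HahnSeries

variable {Γ R : Type*} [AddCommMonoid Γ] [LinearOrder Γ] [IsOrderedCancelAddMonoid Γ]
  [Semiring R]

theorem coeff_mul_eq_zero_of_lt_order_add [NoZeroDivisors R] {x y : HahnSeries Γ R} {g : Γ}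
    (hg : g < x.order + y.order) : (x * y).coeff g = 0 := by
  rcases eq_or_ne x 0 with rfl | hx
  · rw [zero_mul, coeff_zero]
  rcases eq_or_ne y 0 with rfl | hy
  · rw [mul_zero, coeff_zero]
  exact coeff_eq_zero_of_lt_order (by rwa [order_mul hx hy])

variable {ω B C : HahnSeries Γ R}

theorem coeff_sq_add_mul_add_eq_zero (h : ω ^ 2 + B * ω + C = 0) (g : Γ) :
    (ω * ω).coeff g + (B * ω).coeff g + C.coeff g = 0 := by
  rw [← sq, ← coeff_add, ← coeff_add, h, coeff_zero]

theorem order_eq_of_sq_add_mul_add_eq_zero [NoZeroDivisors R] (h : ω ^ 2 + B * ω + C = 0)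
    (hC : C ≠ 0) (hCB : C.order = B.order + B.order) : ω.order = B.order := by
  have hω : ω ≠ 0 := by
    rintro rfl
    rw [zero_pow two_ne_zero, mul_zero, zero_add, zero_add] at h
    exact hC h
  rcases lt_trichotomy ω.order B.order with hlt | heq | hgt
  · have hsum := coeff_sq_add_mul_add_eq_zero h (ω.order + ω.order)
    rw [coeff_mul_order_add_order,
      coeff_mul_eq_zero_of_lt_order_add (add_lt_add_left hlt _),
      coeff_eq_zero_of_lt_order (hCB ▸ add_lt_add hlt hlt), add_zero, add_zero,
      mul_self_eq_zero, leadingCoeff_eq_zero] at hsum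
    exact absurd hsum hω
  · exact heq
  · have hsum := coeff_sq_add_mul_add_eq_zero h (B.order + B.order)
    rw [coeff_mul_eq_zero_of_lt_order_add (add_lt_add hgt hgt),
      coeff_mul_eq_zero_of_lt_order_add (add_lt_add_right hgt _), ← hCB, ← leadingCoeff_eq,
      zero_add, zero_add, leadingCoeff_eq_zero] at hsum
    exact absurd hsum hC

theorem leadingCoeff_sq_add_mul_add_eq_zero (h : ω ^ 2 + B * ω + C = 0)
    (hω : ω.order = B.order) (hCB : C.order = B.order + B.order) :
    ω.leadingCoeff ^ 2 + B.leadingCoeff * ω.leadingCoeff + C.leadingCoeff = 0 := by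
  have hωω : (ω * ω).coeff (B.order + B.order) = ω.leadingCoeff * ω.leadingCoeff := by
    rw [← coeff_mul_order_add_order, hω]
  have hBω : (B * ω).coeff (B.order + B.order) = B.leadingCoeff * ω.leadingCoeff := by
    rw [← coeff_mul_order_add_order, hω]
  have hsum := coeff_sq_add_mul_add_eq_zero h (B.order + B.order)
  rwa [hωω, hBω, ← hCB, ← leadingCoeff_eq, ← sq] at hsum

end HahnSeries

theorem polyToLaurentInv_monomial (F : Type) [Field F] (i : ℕ) (a : F) :
    polyToLaurentInv F (monomial i a) = HahnSeries.single (-i : ℤ) a := by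
  rw [polyToLaurentInv, aeval_monomial, HahnSeries.single_pow, HahnSeries.algebraMap_apply',
    ← PowerSeries.C_eq_algebraMap, HahnSeries.ofPowerSeries_C, HahnSeries.C_apply,
    HahnSeries.single_mul_single]
  simp

theorem polyToLaurentInv_eq_sum (F : Type) [Field F] (p : Polynomial F) :
    polyToLaurentInv F p = ∑ i ∈ p.support, HahnSeries.single (-i : ℤ) (p.coeff i) := by
  conv_lhs => rw [p.as_sum_support, polyToLaurentInv, map_sum]
  exact Finset.sum_congr rfl fun i _ => polyToLaurentInv_monomial F i _

theorem coeff_polyToLaurentInv_neg_natCast (F : Type) [Field F] (p : Polynomial F) (k : ℕ) :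
    (polyToLaurentInv F p).coeff (-k) = p.coeff k := by
  simp [polyToLaurentInv_eq_sum, HahnSeries.coeff_sum, HahnSeries.coeff_single, eq_comm]

theorem order_polyToLaurentInv (F : Type) [Field F] (p : Polynomial F) :
    (polyToLaurentInv F p).order = -p.natDegree := by
  rcases eq_or_ne p 0 with rfl | hp
  · simp [polyToLaurentInv]
  have hlead : (polyToLaurentInv F p).coeff (-p.natDegree) ≠ 0 := by
    rwa [coeff_polyToLaurentInv_neg_natCast, ← leadingCoeff, leadingCoeff_ne_zero]
  refine le_antisymm (HahnSeries.order_le_of_coeff_ne_zero hlead)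
    ((HahnSeries.le_order_iff_forall (HahnSeries.ne_zero_of_coeff_ne_zero hlead)).mpr ?_)
  intro m hm
  obtain ⟨k, rfl⟩ : ∃ k : ℕ, m = -k := ⟨m.natAbs, by omega⟩
  rw [coeff_polyToLaurentInv_neg_natCast]
  exact coeff_eq_zero_of_natDegree_lt (by omega)

theorem leadingCoeff_polyToLaurentInv (F : Type) [Field F] (p : Polynomial F) :
    (polyToLaurentInv F p).leadingCoeff = p.leadingCoeff := by
  rw [HahnSeries.leadingCoeff_eq, order_polyToLaurentInv, coeff_polyToLaurentInv_neg_natCast,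
    leadingCoeff]

theorem no_laurent_root_of_unsolvable_leading_equation_general
    (F : Type) [Field F] (b c : Polynomial F)
    (hb : b ≠ 0) (hdeg : c.natDegree = 2 * b.natDegree)
    (hnoroot : ∀ t : F,
      b.leadingCoeff ^ 2 * t ^ 2 + b.leadingCoeff ^ 2 * t + c.leadingCoeff ≠ 0) :
    ¬ ∃ ω : LaurentSeries F,
        ω ^ 2 + polyToLaurentInv F b * ω + polyToLaurentInv F c = 0 := by
  rintro ⟨ω, hω⟩
  have hc : polyToLaurentInv F c ≠ 0 := by
    rw [← HahnSeries.leadingCoeff_ne_zero, leadingCoeff_polyToLaurentInv]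
    simpa using hnoroot 0
  have hCB : (polyToLaurentInv F c).order =
      (polyToLaurentInv F b).order + (polyToLaurentInv F b).order := by
    rw [order_polyToLaurentInv, order_polyToLaurentInv, hdeg]
    push_cast
    ring
  have hlead := HahnSeries.leadingCoeff_sq_add_mul_add_eq_zero hω
    (HahnSeries.order_eq_of_sq_add_mul_add_eq_zero hω hc hCB) hCB
  rw [leadingCoeff_polyToLaurentInv, leadingCoeff_polyToLaurentInv] at hlead
  refine hnoroot (ω.leadingCoeff / b.leadingCoeff) ?_
  have hb₀ : b.leadingCoeff ≠ 0 := leadingCoeff_ne_zero.mpr hb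
  field_simp
  linear_combination hlead

/-- char F = 2, deg c = 2 deg b, b ≠ 0 and b₀²t² + b₀²t + c₀ = 0 has no root
in F: then ω² + bω + c = 0 has no solution in F((1/x)). -/
theorem no_laurent_root_of_unsolvable_leading_equation
    (F : Type) [Field F] [CharP F 2] (b c : Polynomial F)
    (hb : b ≠ 0) (hc : c ≠ 0) (hdeg : c.natDegree = 2 * b.natDegree)
    (hnoroot : ∀ t : F,
      b.leadingCoeff ^ 2 * t ^ 2 + b.leadingCoeff ^ 2 * t + c.leadingCoeff ≠ 0) :
    ¬ ∃ ω : LaurentSeries F,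
        ω ^ 2 + polyToLaurentInv F b * ω + polyToLaurentInv F c = 0 :=
  no_laurent_root_of_unsolvable_leading_equation_general F b c hb hdeg hnoroot
end

section
/- Let F have characteristic 2 and b, c ∈ F[x] with 0 ≤ deg c < 2 deg b. Then the equation ω² + bω + c = 0 has a solution ω in the Laurent series field F((1/x)). -/
/-!
Put `X = 1/x`, so that `F((1/x)) = F((X))` and `x = X⁻¹`. With `n = deg b`, the reversed
polynomials give `b = x^n B(X)` and `c = x^(2n) C(X)` with `B, C ∈ F⟦X⟧`, where `B(0)` is the
leading coefficient of `b` and `C(0) = 0` because `deg c < 2n`. Hence `0` is a simple root of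
`σ² + Bσ + C` modulo `X`, Hensel's lemma in `F⟦X⟧` lifts it to a root `σ`, and `ω = x^n σ` solves
`ω² + bω + c = x^(2n) (σ² + Bσ + C) = 0`.
-/

open Polynomial

theorem PowerSeries.exists_sq_add_mul_add_eq_zero {R : Type*} [CommRing R] {B C : PowerSeries R}
    (hB : IsUnit B) (hC : constantCoeff C = 0) :
    ∃ σ : PowerSeries R, σ ^ 2 + B * σ + C = 0 := by
  have hmonic : (Polynomial.X ^ 2 + Polynomial.C B * Polynomial.X + Polynomial.C C).Monic := by
    rw [add_assoc]
    refine monic_X_pow_add ?_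
    compute_degree!
  obtain ⟨σ, hσ, -⟩ := HenselianRing.is_henselian (I := Ideal.span {X}) _ hmonic 0
    (by simpa [Ideal.mem_span_singleton, X_dvd_iff] using hC)
    (by simpa [derivative_X_pow] using hB.map _)
  exact ⟨σ, by simpa using hσ⟩

namespace HahnSeries

variable {R : Type*} [CommRing R]

noncomputable instance invertibleSingleNegOne : Invertible (single (-1 : ℤ) (1 : R)) where
  invOf := single 1 1
  invOf_mul_self := by simp [single_mul_single]
  mul_invOf_self := by simp [single_mul_single]

theorem ofPowerSeries_coe_polynomial (q : R[X]) :
    ofPowerSeries ℤ R q = aeval (single (1 : ℤ) (1 : R)) q := by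
  rw [← eval₂_C_X_eq_coe, hom_eval₂, aeval_def]
  congr 1
  ext
  simp

end HahnSeries

theorem polyToLaurentInv_eq_ofPowerSeries_reflect_mul {F : Type} [Field F] {p : F[X]} {m : ℕ}
    (hp : p.natDegree ≤ m) :
    polyToLaurentInv F p =
      HahnSeries.ofPowerSeries ℤ F (reflect m p) * HahnSeries.single (-1 : ℤ) 1 ^ m := by
  rw [HahnSeries.ofPowerSeries_coe_polynomial]
  exact (eval₂_reflect_mul_pow _ _ m p hp).symm

theorem laurent_root_exists_real_case_general
    (F : Type) [Field F] (b c : Polynomial F)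
    (hdeg : c.natDegree < 2 * b.natDegree) :
    ∃ ω : LaurentSeries F,
      ω ^ 2 + polyToLaurentInv F b * ω + polyToLaurentInv F c = 0 := by
  have hb : b ≠ 0 := by rintro rfl; simp at hdeg
  obtain ⟨σ, hσ⟩ := PowerSeries.exists_sq_add_mul_add_eq_zero
    (B := (reflect b.natDegree b : PowerSeries F))
    (C := (reflect (2 * b.natDegree) c : PowerSeries F))
    (by simpa [PowerSeries.isUnit_iff_constantCoeff, coeff_reflect] using hb)
    (by simp [coeff_reflect, coeff_eq_zero_of_natDegree_lt hdeg])
  set x := HahnSeries.single (-1 : ℤ) (1 : F)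
  refine ⟨HahnSeries.ofPowerSeries ℤ F σ * x ^ b.natDegree, ?_⟩
  have hσ' := congrArg (HahnSeries.ofPowerSeries ℤ F) hσ
  simp only [map_add, map_mul, map_pow, map_zero] at hσ'
  rw [polyToLaurentInv_eq_ofPowerSeries_reflect_mul le_rfl,
    polyToLaurentInv_eq_ofPowerSeries_reflect_mul hdeg.le]
  linear_combination x ^ (2 * b.natDegree) * hσ'

/-- char F = 2, 0 ≤ deg c < 2 deg b: ω² + bω + c = 0 has a solution in the
Laurent series field F((1/x)) (the real case). -/
theorem laurent_root_exists_real_case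
    (F : Type) [Field F] [CharP F 2] (b c : Polynomial F)
    (hc : c ≠ 0) (hdeg : c.natDegree < 2 * b.natDegree) :
    ∃ ω : LaurentSeries F,
      ω ^ 2 + polyToLaurentInv F b * ω + polyToLaurentInv F c = 0 :=
  laurent_root_exists_real_case_general F b c hdeg
end

section
/- Let F be a field of characteristic 2, and b, c ∈ F[x] with deg c odd and deg c > 2 deg b. Define Deg(u + Δv) = max(deg u, deg v + (deg c)/2) ∈ ℚ ∪ {-∞} on R = F[x][t]/(t² + bt + c). Then Deg is multiplicative with respect to addition: Deg(αβ) = Deg(α) + Deg(β) for all α, β ∈ R. -/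
/-!
Write `N(u, v) = u² - b u v + c v²` for the norm of `u + Δ v` down to `F[x]`; it is
multiplicative. Since `deg c` is odd, `deg u²` and `deg (c v²)` have different parities, so they
never cancel, and `deg (b u v)` lies strictly below their maximum because `2 deg b < deg c`.
Hence `deg N(u, v) = max (2 deg u) (2 deg v + deg c) = 2 Deg(u + Δ v)`, and `Deg` inherits
additivity from the degree of the product of norms.
-/

open Polynomial

/-- The half-integer valued degree Deg(u + Δv) = max(deg u, deg v + deg c / 2)
on R = F[x][t]/(t² + bt + c). -/
noncomputable def halfDeg {F : Type} [Field F] (c u v : Polynomial F) :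
    WithBot ℚ :=
  max ((u.degree).map (Nat.cast : ℕ → ℚ))
    ((v.degree).map (Nat.cast : ℕ → ℚ) + ((c.natDegree : ℚ) / 2 : ℚ))

namespace Polynomial

variable {R : Type*} [Semiring R]

theorem degree_add_eq_max_of_degree_ne {p q : R[X]} (h : p.degree ≠ q.degree) :
    (p + q).degree = max p.degree q.degree := by
  rcases h.lt_or_gt with h | h
  · rw [degree_add_eq_right_of_degree_lt h, max_eq_right h.le]
  · rw [degree_add_eq_left_of_degree_lt h, max_eq_left h.le]

end Polynomial

namespace WithBot

theorem map_half_add (a b : WithBot ℕ) :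
    (a + b).map (fun n : ℕ => (n : ℚ) / 2) =
      a.map (fun n : ℕ => (n : ℚ) / 2) + b.map (fun n : ℕ => (n : ℚ) / 2) := by
  cases a using WithBot.recBotCoe <;> cases b using WithBot.recBotCoe
  all_goals simp [← WithBot.coe_add, add_div]

theorem map_half_add_self (a : WithBot ℕ) :
    (a + a).map (fun n : ℕ => (n : ℚ) / 2) = a.map Nat.cast := by
  cases a using WithBot.recBotCoe
  all_goals simp [← WithBot.coe_add]

end WithBot

section NormForm

variable {R : Type*} [CommRing R]

def normForm (b c u v : R) : R := u ^ 2 - b * u * v + c * v ^ 2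

theorem normForm_mul (b c u₁ v₁ u₂ v₂ : R) :
    normForm b c (u₁ * u₂ - c * (v₁ * v₂)) (u₁ * v₂ + v₁ * u₂ - b * (v₁ * v₂)) =
      normForm b c u₁ v₁ * normForm b c u₂ v₂ := by
  unfold normForm
  ring

variable [IsDomain R] {b c : R[X]}

theorem degree_normForm (hodd : Odd c.natDegree) (hdeg : 2 * b.natDegree < c.natDegree)
    (u v : R[X]) : (normForm b c u v).degree = max (u ^ 2).degree (c * v ^ 2).degree := by
  rcases eq_or_ne v 0 with rfl | hv
  · simp [normForm]
  have hc : c ≠ 0 := ne_zero_of_natDegree_gt hodd.pos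
  have hcv : (c * v ^ 2).natDegree = c.natDegree + 2 * v.natDegree := by
    rw [natDegree_mul hc (pow_ne_zero 2 hv), natDegree_pow]
  have hsq : (u ^ 2 + c * v ^ 2).degree = max (u ^ 2).degree (c * v ^ 2).degree := by
    refine degree_add_eq_max_of_degree_ne fun h => ?_
    have := natDegree_eq_of_degree_eq h
    rw [natDegree_pow, hcv] at this
    obtain ⟨k, hk⟩ := hodd
    omega
  have hbuv : (b * u * v).natDegree ≤ b.natDegree + u.natDegree + v.natDegree :=
    natDegree_mul_le.trans (Nat.add_le_add_right natDegree_mul_le _)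
  have hlt : (b * u * v).degree < (u ^ 2 + c * v ^ 2).degree := by
    rw [hsq, lt_max_iff]
    rcases lt_or_ge (b.natDegree + v.natDegree) u.natDegree with h | h
    · exact Or.inl (degree_lt_degree (by rw [natDegree_pow]; omega))
    · exact Or.inr (degree_lt_degree (by rw [hcv]; omega))
  rw [normForm, sub_add_eq_add_sub, degree_sub_eq_left_of_degree_lt hlt, hsq]

end NormForm

theorem halfDeg_eq_map_degree_normForm {F : Type} [Field F] {b c : F[X]}
    (hodd : Odd c.natDegree) (hdeg : 2 * b.natDegree < c.natDegree) (u v : F[X]) :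
    halfDeg c u v = (normForm b c u v).degree.map (fun n : ℕ => (n : ℚ) / 2) := by
  have hc : c ≠ 0 := ne_zero_of_natDegree_gt hodd.pos
  have hmono : Monotone fun n : ℕ => (n : ℚ) / 2 := fun m n h => by dsimp only; gcongr
  rw [degree_normForm hodd hdeg, hmono.withBot_map.map_max, degree_mul, WithBot.map_half_add,
    sq, sq, degree_mul, degree_mul, WithBot.map_half_add_self, WithBot.map_half_add_self,
    degree_eq_natDegree hc, Nat.cast_withBot, WithBot.map_coe, add_comm, halfDeg]

namespace AdjoinRoot

variable {R : Type*} [CommRing R]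

theorem of_add_root_mul_of_mul {b c : R} {f : R[X]} (hf : f = X ^ 2 + C b * X + C c)
    (u₁ v₁ u₂ v₂ : R) :
    (of f u₁ + root f * of f v₁) * (of f u₂ + root f * of f v₂) =
      of f (u₁ * u₂ - c * (v₁ * v₂)) + root f * of f (u₁ * v₂ + v₁ * u₂ - b * (v₁ * v₂)) := by
  have hroot : root f ^ 2 + of f b * root f + of f c = 0 := by
    simpa [hf] using eval₂_root f
  simp only [map_sub, map_add, map_mul]
  linear_combination (of f v₁ * of f v₂) * hroot

theorem of_add_root_mul_of_inj [IsDomain R] {f : R[X]} (hf : 1 < f.degree) {u v u' v' : R} :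
    of f u + root f * of f v = of f u' + root f * of f v' ↔ u = u' ∧ v = v' := by
  refine ⟨fun h => ?_, by rintro ⟨rfl, rfl⟩; rfl⟩
  have hdvd : f ∣ C (v - v') * X + C (u - u') := by
    rw [← mk_eq_zero]
    simp only [map_add, map_mul, map_sub, mk_C, mk_X]
    linear_combination h
  have hzero := eq_zero_of_dvd_of_degree_lt hdvd (degree_linear_le.trans_lt hf)
  exact ⟨by simpa [sub_eq_zero] using congrArg (coeff · 0) hzero,
    by simpa [sub_eq_zero] using congrArg (coeff · 1) hzero⟩

end AdjoinRoot

theorem halfDeg_mul_general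
    (F : Type) [Field F] (b c : Polynomial F)
    (hodd : Odd c.natDegree) (hdeg : 2 * b.natDegree < c.natDegree) :
    ∀ (f : Polynomial (Polynomial F)), f = X ^ 2 + C b * X + C c →
    ∀ u₁ v₁ u₂ v₂ U V : Polynomial F,
      (AdjoinRoot.of f u₁ + AdjoinRoot.root f * AdjoinRoot.of f v₁)
          * (AdjoinRoot.of f u₂ + AdjoinRoot.root f * AdjoinRoot.of f v₂)
        = AdjoinRoot.of f U + AdjoinRoot.root f * AdjoinRoot.of f V →
      halfDeg c U V = halfDeg c u₁ v₁ + halfDeg c u₂ v₂ := by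
  intro f hf u₁ v₁ u₂ v₂ U V h
  have hf_deg : 1 < f.degree := by
    rw [hf, show (X ^ 2 + C b * X + C c : F[X][X]).degree = 2 by compute_degree!]
    decide
  rw [AdjoinRoot.of_add_root_mul_of_mul hf, AdjoinRoot.of_add_root_mul_of_inj hf_deg] at h
  obtain ⟨rfl, rfl⟩ := h
  simp only [halfDeg_eq_map_degree_normForm hodd hdeg, normForm_mul, degree_mul,
    WithBot.map_half_add]

/-- char F = 2, deg c odd and deg c > 2 deg b: Deg is additive on products in
R = F[x][t]/(t² + bt + c): Deg(αβ) = Deg α + Deg β. -/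
theorem halfDeg_mul
    (F : Type) [Field F] [CharP F 2] (b c : Polynomial F)
    (hodd : Odd c.natDegree) (hdeg : 2 * b.natDegree < c.natDegree) :
    ∀ (f : Polynomial (Polynomial F)), f = X ^ 2 + C b * X + C c →
    ∀ u₁ v₁ u₂ v₂ U V : Polynomial F,
      (AdjoinRoot.of f u₁ + AdjoinRoot.root f * AdjoinRoot.of f v₁)
          * (AdjoinRoot.of f u₂ + AdjoinRoot.root f * AdjoinRoot.of f v₂)
        = AdjoinRoot.of f U + AdjoinRoot.root f * AdjoinRoot.of f V →
      halfDeg c U V = halfDeg c u₁ v₁ + halfDeg c u₂ v₂ :=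
  halfDeg_mul_general F b c hodd hdeg
end

section
/- Let F be a field of characteristic 2 and b, c, d ∈ F[x] with deg c odd and deg c > 2 deg b. Then every solution (u, v) ∈ F[x]² of u² + buv + cv² = d satisfies 2·deg u ≤ deg d and 2·deg v + deg c ≤ deg d. In particular there are only finitely many solutions when F is finite. -/
open Polynomial

private lemma finite_degree_lt_set (F : Type) [Field F] [Finite F] (n : ℕ) :
    {p : Polynomial F | p.degree < (n : WithBot ℕ)}.Finite := by
  have : Finite (Polynomial.degreeLT F n) :=
    Finite.of_equiv _ (Polynomial.degreeLTEquiv F n).symm.toEquiv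
  have h2 := Set.toFinite (Polynomial.degreeLT F n : Set (Polynomial F))
  convert h2 using 1
  ext p
  simp [Polynomial.mem_degreeLT]

private lemma deg_lt_of_double_le {F : Type} [Field F] {p d : Polynomial F}
    (h : p.degree + p.degree ≤ d.degree) :
    p.degree < ((d.natDegree + 1 : ℕ) : WithBot ℕ) := by
  by_cases hp : p = 0
  · rw [hp, degree_zero]
    exact WithBot.bot_lt_coe _
  · rw [degree_eq_natDegree hp] at h ⊢
    have hd : d.degree ≤ (d.natDegree : WithBot ℕ) := degree_le_natDegree
    have := h.trans hd
    have h2 : ((p.natDegree + p.natDegree : ℕ) : WithBot ℕ) ≤ (d.natDegree : ℕ) := by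
      push_cast; exact this
    have h3 : p.natDegree + p.natDegree ≤ d.natDegree := by exact_mod_cast h2
    exact_mod_cast (show p.natDegree < d.natDegree + 1 by omega)

/-- char F = 2, deg c odd, deg c > 2 deg b: every solution of
u² + buv + cv² = d has 2 deg u ≤ deg d and 2 deg v + deg c ≤ deg d; in
particular, over a finite field there are only finitely many solutions. -/
theorem bounded_solutions_imaginary_odd_case
    (F : Type) [Field F] [CharP F 2] (b c d : Polynomial F)
    (hodd : Odd c.natDegree) (hdeg : 2 * b.natDegree < c.natDegree) :
    (∀ u v : Polynomial F, u ^ 2 + b * u * v + c * v ^ 2 = d →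
      u.degree + u.degree ≤ d.degree ∧ v.degree + v.degree + c.degree ≤ d.degree) ∧
    (Finite F →
      {uv : Polynomial F × Polynomial F |
        uv.1 ^ 2 + b * uv.1 * uv.2 + c * uv.2 ^ 2 = d}.Finite) := by
  have hc0 : c ≠ 0 := by
    rintro rfl; simp at hodd
  have key : ∀ u v : Polynomial F, u ^ 2 + b * u * v + c * v ^ 2 = d →
      u.degree + u.degree ≤ d.degree ∧ v.degree + v.degree + c.degree ≤ d.degree := by
    intro u v h
    by_cases hu : u = 0
    · subst hu
      simp only [ne_eq, OfNat.ofNat_ne_zero, not_false_eq_true, zero_pow, mul_zero, zero_mul,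
        zero_add] at h
      subst h
      constructor
      · simp
      · rw [pow_two, degree_mul, degree_mul]
        exact le_of_eq (add_comm _ _)
    by_cases hv : v = 0
    · subst hv
      simp only [ne_eq, OfNat.ofNat_ne_zero, not_false_eq_true, zero_pow, mul_zero,
        add_zero] at h
      subst h
      constructor
      · rw [pow_two, degree_mul]
      · simp
    -- main case
    have hDu : u.degree = (u.natDegree : WithBot ℕ) := degree_eq_natDegree hu
    have hDv : v.degree = (v.natDegree : WithBot ℕ) := degree_eq_natDegree hv
    have hDc : c.degree = (c.natDegree : WithBot ℕ) := degree_eq_natDegree hc0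
    have hbuv : (b * u * v).degree ≤
        ((b.natDegree + u.natDegree + v.natDegree : ℕ) : WithBot ℕ) := by
      refine (degree_mul_le _ _).trans ?_
      push_cast
      refine add_le_add ((degree_mul_le _ _).trans ?_) hDv.le
      exact add_le_add degree_le_natDegree hDu.le
    have hu2 : (u ^ 2).degree = ((u.natDegree + u.natDegree : ℕ) : WithBot ℕ) := by
      rw [pow_two, degree_mul, hDu]; push_cast; rfl
    have hcv2 : (c * v ^ 2).degree =
        ((c.natDegree + (v.natDegree + v.natDegree) : ℕ) : WithBot ℕ) := by
      rw [degree_mul, pow_two, degree_mul, hDc, hDv]; push_cast; rfl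
    obtain ⟨k, hk⟩ := hodd
    rcases lt_trichotomy (u.natDegree + u.natDegree)
        (c.natDegree + (v.natDegree + v.natDegree)) with hlt | heq | hgt
    · -- cv² dominates
      have h1 : (u ^ 2).degree < (c * v ^ 2).degree := by
        rw [hu2, hcv2]; exact_mod_cast hlt
      have h2 : (b * u * v).degree < (c * v ^ 2).degree := by
        rw [hcv2]
        refine hbuv.trans_lt ?_
        exact_mod_cast (by omega : b.natDegree + u.natDegree + v.natDegree <
          c.natDegree + (v.natDegree + v.natDegree))
      have hdd : d.degree = (c * v ^ 2).degree := by
        rw [← h]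
        exact degree_add_eq_right_of_degree_lt
          ((degree_add_le _ _).trans_lt (max_lt h1 h2))
      constructor
      · rw [hdd, hcv2, hDu]
        calc ((u.natDegree : WithBot ℕ) + u.natDegree)
            = ((u.natDegree + u.natDegree : ℕ) : WithBot ℕ) := by push_cast; rfl
          _ ≤ _ := by exact_mod_cast hlt.le
      · rw [hdd, hcv2, hDv, hDc]
        calc ((v.natDegree : WithBot ℕ) + v.natDegree + c.natDegree)
            = ((c.natDegree + (v.natDegree + v.natDegree) : ℕ) : WithBot ℕ) := by
              push_cast; ring
          _ ≤ _ := le_rfl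
    · omega
    · -- u² dominates
      have h1 : (c * v ^ 2).degree < (u ^ 2).degree := by
        rw [hu2, hcv2]; exact_mod_cast hgt
      have h2 : (b * u * v).degree < (u ^ 2).degree := by
        rw [hu2]
        refine hbuv.trans_lt ?_
        exact_mod_cast (by omega : b.natDegree + u.natDegree + v.natDegree <
          u.natDegree + u.natDegree)
      have hdd : d.degree = (u ^ 2).degree := by
        rw [← h, add_assoc]
        exact degree_add_eq_left_of_degree_lt
          ((degree_add_le _ _).trans_lt (max_lt h2 h1))
      constructor
      · rw [hdd, hu2, hDu]; push_cast; exact le_rfl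
      · rw [hdd, hu2, hDv, hDc]
        calc ((v.natDegree : WithBot ℕ) + v.natDegree + c.natDegree)
            = ((c.natDegree + (v.natDegree + v.natDegree) : ℕ) : WithBot ℕ) := by
              push_cast; ring
          _ ≤ _ := by exact_mod_cast hgt.le
  refine ⟨key, fun hF => ?_⟩
  · refine Set.Finite.subset
      ((finite_degree_lt_set F (d.natDegree + 1)).prod
        (finite_degree_lt_set F (d.natDegree + 1))) ?_
    rintro ⟨u, v⟩ huv
    obtain ⟨h1, h2⟩ := key u v huv
    have hc0' : (0 : WithBot ℕ) ≤ c.degree := by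
      rw [degree_eq_natDegree hc0]; exact_mod_cast Nat.zero_le _
    have h2' : v.degree + v.degree ≤ d.degree := by
      refine le_trans ?_ h2
      calc v.degree + v.degree = v.degree + v.degree + 0 := by rw [add_zero]
        _ ≤ v.degree + v.degree + c.degree := add_le_add le_rfl hc0'
    exact ⟨deg_lt_of_double_le h1, deg_lt_of_double_le h2'⟩
end

section
/- Let F be a finite field of characteristic 2, b, c, d ∈ F[x] with deg c = 2 deg b, b ≠ 0, and suppose b₀²t² + b₀²t + c₀ = 0 has no solution in F (b₀, c₀ the leading coefficients of b, c). Then every solution (u, v) ∈ F[x]² of u² + buv + cv² = d satisfies 2 deg u ≤ deg d and 2 deg v ≤ deg d − deg c. -/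
open Polynomial

/-- F finite of characteristic 2, deg c = 2 deg b, b ≠ 0, and
b₀²t² + b₀²t + c₀ = 0 without roots in F: every solution of
u² + buv + cv² = d has 2 deg u ≤ deg d and 2 deg v ≤ deg d − deg c. -/
theorem bounded_solutions_imaginary_even_case
    (F : Type) [Field F] [Fintype F] [CharP F 2] (b c d : Polynomial F)
    (hb : b ≠ 0) (hc : c ≠ 0) (hdeg : c.natDegree = 2 * b.natDegree)
    (hnoroot : ∀ t : F,
      b.leadingCoeff ^ 2 * t ^ 2 + b.leadingCoeff ^ 2 * t + c.leadingCoeff ≠ 0) :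
    ∀ u v : Polynomial F, u ^ 2 + b * u * v + c * v ^ 2 = d →
      u.degree + u.degree ≤ d.degree ∧ v.degree + v.degree + c.degree ≤ d.degree := by
  intro u v h
  by_cases hv : v = 0
  · subst hv
    simp only [mul_zero, zero_pow, ne_eq, OfNat.ofNat_ne_zero, not_false_eq_true,
      add_zero] at h
    rw [← h]
    constructor
    · rw [degree_pow, two_smul]
    · simp
  by_cases hu : u = 0
  · subst hu
    simp only [ne_eq, OfNat.ofNat_ne_zero, not_false_eq_true, zero_pow, mul_zero,
      zero_mul, zero_add] at h
    rw [← h]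
    refine ⟨by simp, le_of_eq ?_⟩
    rw [degree_mul, degree_pow, two_smul, add_comm]
  -- main case: u, v ≠ 0
  set m := u.natDegree with hm
  set n := v.natDegree with hn
  set k := b.natDegree with hk
  have hu2 : (u ^ 2).degree = ((2 * m : ℕ) : WithBot ℕ) := by
    rw [degree_pow, degree_eq_natDegree hu]
    push_cast; rw [two_smul, two_mul]
  have hbuv : (b * u * v).degree = ((k + m + n : ℕ) : WithBot ℕ) := by
    rw [degree_mul, degree_mul, degree_eq_natDegree hb, degree_eq_natDegree hu,
      degree_eq_natDegree hv]
    push_cast; ring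
  have hcv2 : (c * v ^ 2).degree = ((2 * k + 2 * n : ℕ) : WithBot ℕ) := by
    rw [degree_mul, degree_pow, degree_eq_natDegree hc, degree_eq_natDegree hv, hdeg]
    push_cast; rw [two_smul]; ring
  have hcd : c.degree = ((2 * k : ℕ) : WithBot ℕ) := by
    rw [degree_eq_natDegree hc, hdeg]
  have key : d.degree = ((max (2 * m) (2 * k + 2 * n) : ℕ) : WithBot ℕ) := by
    rcases lt_trichotomy m (k + n) with hlt | heq | hgt
    · -- c*v^2 dominates
      have hmax : max (2 * m) (2 * k + 2 * n) = 2 * k + 2 * n := by omega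
      rw [hmax, ← h]
      have : (u ^ 2 + b * u * v).degree < (c * v ^ 2).degree := by
        refine lt_of_le_of_lt (degree_add_le _ _) ?_
        rw [hu2, hbuv, hcv2, max_lt_iff]
        constructor <;> exact_mod_cast by omega
      rw [degree_add_eq_right_of_degree_lt this]
      exact hcv2
    · -- equal degrees: leading coefficient argument
      have hmax : max (2 * m) (2 * k + 2 * n) = 2 * m := by omega
      rw [hmax]
      set u0 := u.leadingCoeff with hu0
      set v0 := v.leadingCoeff with hv0
      set b0 := b.leadingCoeff with hb0
      set c0 := c.leadingCoeff with hc0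
      have hu0n : u0 ≠ 0 := leadingCoeff_ne_zero.mpr hu
      have hv0n : v0 ≠ 0 := leadingCoeff_ne_zero.mpr hv
      have hb0n : b0 ≠ 0 := leadingCoeff_ne_zero.mpr hb
      have hL : u0 ^ 2 + b0 * u0 * v0 + c0 * v0 ^ 2 ≠ 0 := by
        intro hL0
        apply hnoroot (u0 * (b0 * v0)⁻¹)
        have : b0 ^ 2 * (u0 * (b0 * v0)⁻¹) ^ 2 + b0 ^ 2 * (u0 * (b0 * v0)⁻¹) + c0
            = (u0 ^ 2 + b0 * u0 * v0 + c0 * v0 ^ 2) * (v0 ^ 2)⁻¹ := by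
          field_simp
        rw [this, hL0, zero_mul]
      have hcoeff : d.coeff (2 * m) = u0 ^ 2 + b0 * u0 * v0 + c0 * v0 ^ 2 := by
        rw [← h]
        have e1 : (u ^ 2).coeff (2 * m) = u0 ^ 2 := by
          have : (u ^ 2).natDegree = 2 * m := by rw [natDegree_pow]
          rw [← this, coeff_natDegree, leadingCoeff_pow]
        have e2 : (b * u * v).coeff (2 * m) = b0 * u0 * v0 := by
          have : (b * u * v).natDegree = 2 * m := by
            rw [natDegree_mul (mul_ne_zero hb hu) hv, natDegree_mul hb hu]
            omega
          rw [← this, coeff_natDegree, leadingCoeff_mul, leadingCoeff_mul]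
        have e3 : (c * v ^ 2).coeff (2 * m) = c0 * v0 ^ 2 := by
          have : (c * v ^ 2).natDegree = 2 * m := by
            rw [natDegree_mul hc (pow_ne_zero 2 hv), natDegree_pow, hdeg]
            omega
          rw [← this, coeff_natDegree, leadingCoeff_mul, leadingCoeff_pow]
        simp [e1, e2, e3]
      have hle : d.degree ≤ ((2 * m : ℕ) : WithBot ℕ) := by
        rw [← h]
        refine (degree_add_le _ _).trans ?_
        rw [max_le_iff]
        refine ⟨(degree_add_le _ _).trans ?_, ?_⟩
        · rw [max_le_iff, hu2, hbuv]
          constructor <;> exact_mod_cast by omega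
        · rw [hcv2]; exact_mod_cast by omega
      have hge : ((2 * m : ℕ) : WithBot ℕ) ≤ d.degree :=
        le_degree_of_ne_zero (hcoeff ▸ hL)
      exact le_antisymm hle hge
    · -- u^2 dominates
      have hmax : max (2 * m) (2 * k + 2 * n) = 2 * m := by omega
      rw [hmax, ← h, add_assoc]
      have : (b * u * v + c * v ^ 2).degree < (u ^ 2).degree := by
        refine lt_of_le_of_lt (degree_add_le _ _) ?_
        rw [hu2, hbuv, hcv2, max_lt_iff]
        constructor <;> exact_mod_cast by omega
      rw [degree_add_eq_left_of_degree_lt this]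
      exact hu2
  rw [key, degree_eq_natDegree hu, degree_eq_natDegree hv, hcd]
  constructor <;> exact_mod_cast by omega
end

section
/- Let F be a finite field of characteristic 2 and b, c ∈ F[x] with deg c < 2 deg b, such that t² + bt + c has no root in F(x). Let R = F[x][t]/(t² + bt + c) and let U(R) = {u + Δv : u² + buv + cv² = 1}. Then U(R) is a subgroup of the unit group R*, and R* ≅ U(R) × F* (every unit ε of R can be written uniquely as αω with α ∈ F* and ω ∈ U(R)). -/
/-!
Sending the root `Δ` to `ω` identifies `R` with `QuadraticAlgebra F[x] (-c) (-b)`, whose norm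
`N (u + Δv) = u² - buv + cv²` is multiplicative and detects units; in characteristic 2 it equals
`u² + buv + cv²`, so `U(R)` is the kernel of `N`, closed under inverses. For a unit `ε`, `N ε` is
a unit of `F[x]`, i.e. a nonzero constant, and since squaring is a bijection of `F` it is `α²`
for exactly one `α ∈ F`. Then `ε = α · (α⁻¹ε)` with `N (α⁻¹ε) = 1`, and `α` is forced because
`N (αω) = α²`.
-/

open Polynomial AdjoinRoot

section QuadraticAdjoinRoot

variable {R : Type*} [CommRing R]

theorem AdjoinRoot.exists_eq_of_add_root_mul_of {f : R[X]} (hf : f.Monic) (hdeg : f.degree ≤ 2)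
    (x : AdjoinRoot f) : ∃ u v : R, x = of f u + root f * of f v := by
  obtain ⟨p, rfl⟩ := mk_surjective x
  rcases subsingleton_or_nontrivial R with hR | hR
  · exact ⟨0, 0, by simp [Subsingleton.elim p 0]⟩
  have hr : (p %ₘ f).degree ≤ 1 :=
    Order.le_of_lt_succ ((degree_modByMonic_lt p hf).trans_le hdeg)
  refine ⟨(p %ₘ f).coeff 0, (p %ₘ f).coeff 1, ?_⟩
  conv_lhs => rw [← modByMonic_add_div p f, map_add, map_mul, mk_self, zero_mul, add_zero,
    eq_X_add_C_of_degree_le_one hr]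
  simp only [map_add, map_mul, mk_C, mk_X]
  ring

variable (b c : R)

theorem QuadraticAlgebra.eval₂_omega :
    (X ^ 2 + C b * X + C c).eval₂ (algebraMap R (QuadraticAlgebra R (-c) (-b))) omega = 0 := by
  ext <;> simp [pow_two]

namespace AdjoinRoot

noncomputable def toQuadraticAlgebra :
    AdjoinRoot (X ^ 2 + C b * X + C c) →+* QuadraticAlgebra R (-c) (-b) :=
  lift _ QuadraticAlgebra.omega (QuadraticAlgebra.eval₂_omega b c)

variable {b c} in
theorem toQuadraticAlgebra_of_add_root_mul_of (u v : R) :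
    toQuadraticAlgebra b c (of _ u + root _ * of _ v) = ⟨u, v⟩ := by
  ext <;> simp [toQuadraticAlgebra]

theorem toQuadraticAlgebra_bijective : Function.Bijective (toQuadraticAlgebra b c) := by
  have hrepr := exists_eq_of_add_root_mul_of (f := X ^ 2 + C b * X + C c)
    (by monicity!) (by compute_degree!)
  refine ⟨(injective_iff_map_eq_zero _).mpr fun x hx ↦ ?_,
    fun ⟨u, v⟩ ↦ ⟨_, toQuadraticAlgebra_of_add_root_mul_of u v⟩⟩
  obtain ⟨u, v, rfl⟩ := hrepr x
  rw [toQuadraticAlgebra_of_add_root_mul_of] at hx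
  obtain ⟨rfl, rfl⟩ : u = 0 ∧ v = 0 :=
    ⟨congrArg QuadraticAlgebra.re hx, congrArg QuadraticAlgebra.im hx⟩
  simp

noncomputable def quadraticAlgebraEquiv :
    AdjoinRoot (X ^ 2 + C b * X + C c) ≃+* QuadraticAlgebra R (-c) (-b) :=
  RingEquiv.ofBijective _ (toQuadraticAlgebra_bijective b c)

noncomputable def quadraticNorm : AdjoinRoot (X ^ 2 + C b * X + C c) →* R :=
  QuadraticAlgebra.norm.comp (quadraticAlgebraEquiv b c : _ →* QuadraticAlgebra R (-c) (-b))

variable {b c}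

theorem quadraticNorm_of_add_root_mul_of (u v : R) :
    quadraticNorm b c (of _ u + root _ * of _ v) = u ^ 2 - b * u * v + c * v ^ 2 := by
  simp only [quadraticNorm, MonoidHom.comp_apply, MonoidHom.coe_coe]
  rw [quadraticAlgebraEquiv, RingEquiv.ofBijective_apply, toQuadraticAlgebra_of_add_root_mul_of,
    QuadraticAlgebra.norm_def]
  ring

theorem quadraticNorm_algebraMap (r : R) :
    quadraticNorm b c (algebraMap R _ r) = r ^ 2 := by
  simp [quadraticNorm, quadraticAlgebraEquiv, toQuadraticAlgebra]

instance : IsLocalHom (quadraticNorm b c) where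
  map_nonunit x hx :=
    (isUnit_map_iff (quadraticAlgebraEquiv b c) x).mp
      (QuadraticAlgebra.isUnit_iff_norm_isUnit.mpr hx)

theorem quadraticNorm_eq_one_iff [CharP R 2] (x : AdjoinRoot (X ^ 2 + C b * X + C c)) :
    quadraticNorm b c x = 1 ↔
      ∃ u v : R, x = of _ u + root _ * of _ v ∧ u ^ 2 + b * u * v + c * v ^ 2 = 1 := by
  constructor
  · obtain ⟨u, v, rfl⟩ := exists_eq_of_add_root_mul_of (by monicity!) (by compute_degree!) x
    rw [quadraticNorm_of_add_root_mul_of, CharTwo.sub_eq_add]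
    exact fun h ↦ ⟨u, v, rfl, h⟩
  · rintro ⟨u, v, rfl, h⟩
    rwa [quadraticNorm_of_add_root_mul_of, CharTwo.sub_eq_add]

end AdjoinRoot

end QuadraticAdjoinRoot

theorem MonoidHom.exists_mul_eq_one_of_map_eq_one {M N : Type*} [Monoid M] [Monoid N]
    (φ : M →* N) [IsLocalHom φ] {x : M} (hx : φ x = 1) : ∃ y, φ y = 1 ∧ x * y = 1 := by
  obtain ⟨u, rfl⟩ := (isUnit_map_iff φ x).mp (hx ▸ isUnit_one)
  refine ⟨↑u⁻¹, ?_, u.mul_inv⟩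
  calc φ ↑u⁻¹ = φ u * φ ↑u⁻¹ := by rw [hx, one_mul]
    _ = 1 := by rw [← map_mul, u.mul_inv, map_one]

theorem existsUnique_algebraMap_mul_of_isUnit {K A : Type*} [Field K] [ExpChar K 2]
    [PerfectRing K 2] [Semiring A] [Algebra K A]
    (N : A →* K[X]) (hN : ∀ α : K, N (algebraMap K A α) = C (α ^ 2)) {ε : A} (hε : IsUnit ε) :
    ∃! p : K × A, p.1 ≠ 0 ∧ N p.2 = 1 ∧ ε = algebraMap K A p.1 * p.2 := by
  obtain ⟨β, hβ, hNε⟩ := Polynomial.isUnit_iff.mp (hε.map N)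
  obtain ⟨α, rfl⟩ := surjective_frobenius K 2 β
  rw [frobenius_def] at hβ hNε
  have hα : α ≠ 0 := fun h ↦ hβ.ne_zero (by simp [h])
  refine ⟨(α, algebraMap K A α⁻¹ * ε), ⟨hα, ?_, ?_⟩, ?_⟩
  · rw [map_mul, hN, ← hNε, ← C_mul, inv_pow, inv_mul_cancel₀ (pow_ne_zero 2 hα), C_1]
  · rw [← mul_assoc, ← map_mul, mul_inv_cancel₀ hα, map_one, one_mul]
  · rintro ⟨γ, w⟩ ⟨hγ, hw, rfl⟩
    have hγα : γ = α := frobenius_inj K 2 <| C_injective <| by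
      rw [frobenius_def, frobenius_def, hNε, map_mul, hN, hw, mul_one]
    subst hγα
    rw [← mul_assoc, ← map_mul, inv_mul_cancel₀ hγ, map_one, one_mul]

theorem units_decompose_as_normone_times_constants_general
    (F : Type) [Field F] [Fintype F] [CharP F 2] (b c : Polynomial F) :
    ∀ (f : Polynomial (Polynomial F)), f = X ^ 2 + C b * X + C c →
    ∀ (S : Set (AdjoinRoot f)),
      S = {ω | ∃ u v : Polynomial F,
        ω = AdjoinRoot.of f u + AdjoinRoot.root f * AdjoinRoot.of f v ∧
        u ^ 2 + b * u * v + c * v ^ 2 = 1} →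
    -- U(R) is a subgroup of R*
    ((1 : AdjoinRoot f) ∈ S ∧
     (∀ ω₁ ω₂, ω₁ ∈ S → ω₂ ∈ S → ω₁ * ω₂ ∈ S) ∧
     (∀ ω, ω ∈ S → ∃ ω', ω' ∈ S ∧ ω * ω' = 1)) ∧
    -- R* = U(R) × F*
    (∀ ε : AdjoinRoot f, IsUnit ε →
      ∃! p : F × AdjoinRoot f,
        p.1 ≠ 0 ∧ p.2 ∈ S ∧ ε = algebraMap F (AdjoinRoot f) p.1 * p.2) := by
  intro f hf S hS
  subst hf
  have hSN : S = MonoidHom.mker (quadraticNorm b c) := by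
    rw [hS]; ext; exact (quadraticNorm_eq_one_iff _).symm
  subst hSN
  refine ⟨⟨one_mem _, fun _ _ ↦ mul_mem,
      fun _ ↦ (quadraticNorm b c).exists_mul_eq_one_of_map_eq_one⟩,
    fun ε hε ↦ existsUnique_algebraMap_mul_of_isUnit _ (fun α ↦ ?_) hε⟩
  rw [IsScalarTower.algebraMap_apply F F[X], quadraticNorm_algebraMap, Polynomial.algebraMap_eq,
    C_pow]

/-- F finite of characteristic 2, deg c < 2 deg b, t² + bt + c without root in
F(x): the norm-one elements U(R) = {u + Δv : u² + buv + cv² = 1} of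
R = F[x][t]/(t² + bt + c) form a subgroup of the units, and every unit of R is
uniquely a product αω with α ∈ F* and ω ∈ U(R) (so R* ≅ U(R) × F*). -/
theorem units_decompose_as_normone_times_constants
    (F : Type) [Field F] [Fintype F] [CharP F 2] (b c : Polynomial F)
    (hc : c ≠ 0) (hdeg : c.natDegree < 2 * b.natDegree)
    (hnoroot : ∀ ρ : RatFunc F,
      ρ ^ 2 + algebraMap (Polynomial F) (RatFunc F) b * ρ
        + algebraMap (Polynomial F) (RatFunc F) c ≠ 0) :
    ∀ (f : Polynomial (Polynomial F)), f = X ^ 2 + C b * X + C c →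
    ∀ (S : Set (AdjoinRoot f)),
      S = {ω | ∃ u v : Polynomial F,
        ω = AdjoinRoot.of f u + AdjoinRoot.root f * AdjoinRoot.of f v ∧
        u ^ 2 + b * u * v + c * v ^ 2 = 1} →
    -- U(R) is a subgroup of R*
    ((1 : AdjoinRoot f) ∈ S ∧
     (∀ ω₁ ω₂, ω₁ ∈ S → ω₂ ∈ S → ω₁ * ω₂ ∈ S) ∧
     (∀ ω, ω ∈ S → ∃ ω', ω' ∈ S ∧ ω * ω' = 1)) ∧
    -- R* = U(R) × F*
    (∀ ε : AdjoinRoot f, IsUnit ε →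
      ∃! p : F × AdjoinRoot f,
        p.1 ≠ 0 ∧ p.2 ∈ S ∧ ε = algebraMap F (AdjoinRoot f) p.1 * p.2) :=
  units_decompose_as_normone_times_constants_general F b c
end

section
/- Let F have characteristic 2 and b, c ∈ F[x] with deg b ≤ deg c < 2 deg b. Write c = bq + r with deg r < deg b (polynomial division). Then the substitution u' = u + qv, v' = v transforms u² + buv + cv² into u'² + bu'v' + c̃v'² with c̃ = q² + r, and deg c̃ < deg c. Iterating, the form can be brought to one with deg c̃ < deg b. -/
open Polynomial

private lemma step_red {F : Type} [Field F] [CharP F 2] (b c : Polynomial F)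
    (hb : b ≠ 0) (hbc : b.degree ≤ c.degree) (hcb : c.natDegree < 2 * b.natDegree)
    (q r : Polynomial F) (hcr : c = b * q + r) (hr : r.degree < b.degree) :
    (∀ u v : Polynomial F,
      (u + q * v) ^ 2 + b * (u + q * v) * v + (q ^ 2 + r) * v ^ 2
        = u ^ 2 + b * u * v + c * v ^ 2) ∧
    (q ^ 2 + r).degree < c.degree := by
  have hc : c ≠ 0 := by
    intro h
    rw [h, degree_zero] at hbc
    exact hb (degree_eq_bot.mp (le_bot_iff.mp hbc))
  have h2 : (2 : Polynomial F) = 0 := by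
    have := CharP.cast_eq_zero (Polynomial F) 2
    simpa using this
  constructor
  · intro u v
    linear_combination (q * u * v + q ^ 2 * v ^ 2) * h2 - v ^ 2 * hcr
  · have hbq : b * q = c - r := by linear_combination -hcr
    have hcsub : (c - r).degree = c.degree :=
      degree_sub_eq_left_of_degree_lt (lt_of_lt_of_le hr hbc)
    have hq : q ≠ 0 := by
      intro h
      rw [h, mul_zero] at hbq
      rw [← hbq, degree_zero] at hcsub
      exact hc (degree_eq_bot.mp hcsub.symm)
    have hcr0 : c - r ≠ 0 := by
      intro h
      rw [h, degree_zero] at hcsub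
      exact hc (degree_eq_bot.mp hcsub.symm)
    have key : b.natDegree + q.natDegree = c.natDegree := by
      have := natDegree_mul hb hq
      rw [hbq, natDegree_eq_of_degree_eq hcsub] at this
      omega
    have hdc : c.degree = (c.natDegree : WithBot ℕ) := degree_eq_natDegree hc
    apply lt_of_le_of_lt (degree_add_le _ _)
    apply max_lt
    · rw [degree_eq_natDegree (pow_ne_zero 2 hq), hdc]
      exact_mod_cast (by rw [natDegree_pow]; omega :
        (q ^ 2).natDegree < c.natDegree)
    · exact lt_of_lt_of_le hr hbc

private lemma iter_red {F : Type} [Field F] [CharP F 2] (b : Polynomial F) (hb : b ≠ 0) :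
    ∀ n (c : Polynomial F), c.natDegree ≤ n → c.natDegree < 2 * b.natDegree →
    ∃ s ctil : Polynomial F,
      (∀ u v : Polynomial F,
        (u + s * v) ^ 2 + b * (u + s * v) * v + ctil * v ^ 2
          = u ^ 2 + b * u * v + c * v ^ 2) ∧
      ctil.degree < b.degree := by
  intro n
  induction n using Nat.strong_induction_on with
  | _ n ih =>
    intro c hn hcb
    by_cases hlt : c.degree < b.degree
    · exact ⟨0, c, fun u v => by ring, hlt⟩
    · have hbc : b.degree ≤ c.degree := le_of_not_gt hlt
      have hc : c ≠ 0 := by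
        intro h
        rw [h, degree_zero] at hbc
        exact hb (degree_eq_bot.mp (le_bot_iff.mp hbc))
      set q := c / b with hq
      set r := c % b with hr
      have hcr : c = b * q + r := (EuclideanDomain.div_add_mod c b).symm
      have hrlt : r.degree < b.degree := EuclideanDomain.mod_lt c hb
      obtain ⟨hid, hdeg⟩ := step_red b c hb hbc hcb q r hcr hrlt
      by_cases hdone : (q ^ 2 + r).degree < b.degree
      · exact ⟨q, q ^ 2 + r, hid, hdone⟩
      · have hct0 : q ^ 2 + r ≠ 0 := by
          intro h
          rw [h, degree_zero] at hdone
          exact hdone (bot_lt_iff_ne_bot.mpr (fun hh => hb (degree_eq_bot.mp hh)))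
        have hlt' : (q ^ 2 + r).natDegree < c.natDegree :=
          natDegree_lt_natDegree hct0 hdeg
        have hpos : 0 < n := lt_of_le_of_lt (Nat.zero_le _) (lt_of_lt_of_le hlt' hn)
        obtain ⟨s, ctil, hid', hdeg'⟩ :=
          ih (n - 1) (by omega) (q ^ 2 + r) (by omega) (by omega)
        refine ⟨q + s, ctil, fun u v => ?_, hdeg'⟩
        have h1 := hid' (u + q * v) v
        have h2 := hid u v
        linear_combination h1 + h2

/-- char F = 2, deg b ≤ deg c < 2 deg b, c = bq + r with deg r < deg b: the
substitution u' = u + qv, v' = v turns u² + buv + cv² into u'² + bu'v' + c̃v'²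
with c̃ = q² + r and deg c̃ < deg c; iterating, the form can be brought to one
whose last coefficient has degree < deg b. -/
theorem reduce_real_case_substitution
    (F : Type) [Field F] [CharP F 2] (b c : Polynomial F)
    (hb : b ≠ 0) (hbc : b.natDegree ≤ c.natDegree)
    (hcb : c.natDegree < 2 * b.natDegree) (hc : c ≠ 0) :
    (∀ q r : Polynomial F, c = b * q + r → r.degree < b.degree →
      (∀ u v : Polynomial F,
        (u + q * v) ^ 2 + b * (u + q * v) * v + (q ^ 2 + r) * v ^ 2
          = u ^ 2 + b * u * v + c * v ^ 2) ∧
      (q ^ 2 + r).degree < c.degree) ∧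
    (∃ s ctil : Polynomial F,
      (∀ u v : Polynomial F,
        (u + s * v) ^ 2 + b * (u + s * v) * v + ctil * v ^ 2
          = u ^ 2 + b * u * v + c * v ^ 2) ∧
      ctil.degree < b.degree) := by
  have hbc' : b.degree ≤ c.degree := by
    rw [degree_eq_natDegree hb, degree_eq_natDegree hc]
    exact_mod_cast hbc
  exact ⟨fun q r hcr hr => step_red b c hb hbc' hcb q r hcr hr,
    iter_red b hb c.natDegree c le_rfl hcb⟩
end
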